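/- arXiv:0710.2147 — 3 statements merged into one kernel-verified Lean document; each statement's English description precedes it below -/
import Mathlib

section
/- Let A be a finite-dimensional G-graded algebra over a field K (G a finite group) such that every homogeneous element of A is either invertible or nilpotent. Then the set of homogeneous nilpotent elements generates a graded ideal J all of whose homogeneous elements are nilpotent, and A/J is a graded algebra in which every nonzero homogeneous element is invertible. -/
/-!
If a homogeneous product `x * n` with `n` nilpotent were a unit, `n` would have a left inverse,
forcing the ring to be zero; so homogeneous multiples of homogeneous nilpotents are nilpotent.
A homogeneous unit `u` of degree `g` has a left inverse of degree `-g`: the degree `-g` component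
of any inverse. So if `a, b` are nilpotents of degree `g` and `a + b` were a unit with such an
inverse `w`, then `1 = w * a + w * b` would be a sum of two nilpotents; hence the nilpotents of
each degree are closed under addition. It follows that the elements all of whose homogeneous
components are nilpotent form an ideal containing every homogeneous nilpotent, so the homogeneous
elements of the ideal these generate are nilpotent, and homogeneous elements outside it are units.
-/

open DirectSum

theorem subsingleton_of_mul_eq_one_of_isNilpotent {R : Type*} [MonoidWithZero R] {a b : R}
    (h : b * a = 1) (ha : IsNilpotent a) : Subsingleton R := by
  obtain ⟨n, hn⟩ := ha
  have hpow := pow_mul_pow_eq_one n h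
  rw [hn, mul_zero] at hpow
  exact subsingleton_of_zero_eq_one hpow

section Graded

variable {ι σ A : Type*} [DecidableEq ι] [AddGroup ι] [Ring A] [SetLike σ A]
  [AddSubmonoidClass σ A] (𝒜 : ι → σ) [GradedRing 𝒜]

theorem exists_left_inv_mem_graded_of_isUnit {g : ι} {u : A} (hu : u ∈ 𝒜 g) (hunit : IsUnit u) :
    ∃ w ∈ 𝒜 (-g), w * u = 1 := by
  obtain ⟨v, hv⟩ := hunit.exists_left_inv
  refine ⟨decompose 𝒜 v (-g), SetLike.coe_mem _, ?_⟩
  rw [← coe_decompose_mul_add_of_right_mem 𝒜 hu, hv, neg_add_cancel,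
    decompose_of_mem_same 𝒜 SetLike.GradedOne.one_mem]

def IsGrLocal : Prop := ∀ g, ∀ a ∈ 𝒜 g, IsUnit a ∨ IsNilpotent a

namespace IsGrLocal

variable {𝒜}

theorem isNilpotent_mul (hloc : IsGrLocal 𝒜) {i j : ι} {x n : A} (hx : x ∈ 𝒜 i) (hn : n ∈ 𝒜 j)
    (hnil : IsNilpotent n) : IsNilpotent (x * n) := by
  rcases hloc _ _ (SetLike.mul_mem_graded hx hn) with hunit | hnil'
  · obtain ⟨w, hw⟩ := hunit.exists_left_inv
    have := subsingleton_of_mul_eq_one_of_isNilpotent (b := w * x) (by rwa [mul_assoc]) hnil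
    exact ⟨1, Subsingleton.elim _ _⟩
  · exact hnil'

theorem isNilpotent_add (hloc : IsGrLocal 𝒜) {g : ι} {a b : A} (ha : a ∈ 𝒜 g) (hb : b ∈ 𝒜 g)
    (hna : IsNilpotent a) (hnb : IsNilpotent b) : IsNilpotent (a + b) := by
  rcases hloc g _ (add_mem ha hb) with hunit | hnil
  · obtain ⟨w, hw, hwab⟩ := exists_left_inv_mem_graded_of_isUnit 𝒜 (add_mem ha hb) hunit
    have hwa : w * a = 1 - w * b := by rw [eq_sub_iff_add_eq, ← mul_add, hwab]
    have hunit_wa : IsUnit (w * a) := hwa ▸ (hloc.isNilpotent_mul hw hb hnb).isUnit_one_sub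
    obtain ⟨c, hc⟩ := hunit_wa.exists_left_inv
    have := subsingleton_of_mul_eq_one_of_isNilpotent hc (hloc.isNilpotent_mul hw ha hna)
    exact ⟨1, Subsingleton.elim _ _⟩
  · exact hnil

def nilpotentsOfDegree (hloc : IsGrLocal 𝒜) (g : ι) : AddSubmonoid A where
  carrier := {a | a ∈ 𝒜 g ∧ IsNilpotent a}
  zero_mem' := ⟨zero_mem _, IsNilpotent.zero⟩
  add_mem' ha hb := ⟨add_mem ha.1 hb.1, hloc.isNilpotent_add ha.1 hb.1 ha.2 hb.2⟩

theorem isNilpotent_decompose_mul_of_mem (hloc : IsGrLocal 𝒜) {i : ι} {x a : A} (hx : x ∈ 𝒜 i)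
    (ha : ∀ j, IsNilpotent (decompose 𝒜 a j : A)) (g : ι) :
    IsNilpotent (decompose 𝒜 (x * a) g : A) := by
  rw [← add_neg_cancel_left i g, coe_decompose_mul_add_of_left_mem 𝒜 hx]
  exact hloc.isNilpotent_mul hx (SetLike.coe_mem _) (ha _)

def componentwiseNilpotentIdeal (hloc : IsGrLocal 𝒜) : Ideal A where
  carrier := {a | ∀ g, IsNilpotent (decompose 𝒜 a g : A)}
  zero_mem' g := by simp
  add_mem' ha hb g := by
    rw [decompose_add, DirectSum.add_apply, AddMemClass.coe_add]
    exact hloc.isNilpotent_add (SetLike.coe_mem _) (SetLike.coe_mem _) (ha g) (hb g)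
  smul_mem' x a ha g := by
    classical
    rw [smul_eq_mul, ← sum_support_decompose 𝒜 x, Finset.sum_mul, decompose_sum,
      DFinsupp.finsetSum_apply, AddSubmonoidClass.coe_finsetSum]
    refine (sum_mem fun i _ => ?_ : _ ∈ hloc.nilpotentsOfDegree g).2
    exact ⟨SetLike.coe_mem _, hloc.isNilpotent_decompose_mul_of_mem (SetLike.coe_mem _) ha g⟩

theorem span_homogeneous_nilpotents_le (hloc : IsGrLocal 𝒜) :
    Ideal.span {a : A | (∃ g, a ∈ 𝒜 g) ∧ IsNilpotent a} ≤ hloc.componentwiseNilpotentIdeal := by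
  refine Ideal.span_le.mpr ?_
  rintro a ⟨⟨h, ha⟩, hnil⟩ g
  by_cases hg : h = g
  · subst hg
    rwa [decompose_of_mem_same 𝒜 ha]
  · rw [decompose_of_mem_ne 𝒜 ha hg]
    exact IsNilpotent.zero

end IsGrLocal

end Graded

theorem stmt_0_general {K G A : Type} [Field K] [AddGroup G] [DecidableEq G]
    [Ring A] [Algebra K A] (𝒜 : G → Submodule K A) [GradedAlgebra 𝒜]
    (hloc : ∀ (g : G), ∀ a ∈ 𝒜 g, IsUnit a ∨ IsNilpotent a) :
    ∃ J : Ideal A,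
      J = Ideal.span {a : A | (∃ g, a ∈ 𝒜 g) ∧ IsNilpotent a} ∧
      Ideal.IsHomogeneous 𝒜 J ∧
      (∀ (g : G), ∀ a ∈ 𝒜 g, a ∈ J → IsNilpotent a) ∧
      (∀ (g : G), ∀ a ∈ 𝒜 g, a ∉ J →
        ∃ b : A, b * a - 1 ∈ J ∧ a * b - 1 ∈ J) := by
  refine ⟨_, rfl, Ideal.homogeneous_span 𝒜 _ fun _ ha => ha.1, ?_, ?_⟩
  · intro g a ha haJ
    have := IsGrLocal.span_homogeneous_nilpotents_le hloc haJ g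
    rwa [decompose_of_mem_same 𝒜 ha] at this
  · intro g a ha haJ
    have hnil : ¬IsNilpotent a := fun h => haJ (Ideal.subset_span ⟨⟨g, ha⟩, h⟩)
    obtain ⟨u, rfl⟩ := (hloc g a ha).resolve_right hnil
    exact ⟨↑u⁻¹, by simp, by simp⟩

/-- If a finite-dimensional `G`-graded algebra `A` is gr-local (every
homogeneous element is invertible or nilpotent), then the ideal `J` generated by the
homogeneous nilpotent elements is a graded (homogeneous) ideal all of whose homogeneous
elements are nilpotent, and every homogeneous element not in `J` becomes invertible
modulo `J`, i.e. `A/J` is a gr-division algebra. -/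
theorem stmt_0 {K G A : Type} [Field K] [AddGroup G] [DecidableEq G] [Fintype G]
    [Ring A] [Algebra K A] (𝒜 : G → Submodule K A) [GradedAlgebra 𝒜]
    [FiniteDimensional K A]
    (hloc : ∀ (g : G), ∀ a ∈ 𝒜 g, IsUnit a ∨ IsNilpotent a) :
    ∃ J : Ideal A,
      J = Ideal.span {a : A | (∃ g, a ∈ 𝒜 g) ∧ IsNilpotent a} ∧
      Ideal.IsHomogeneous 𝒜 J ∧
      (∀ (g : G), ∀ a ∈ 𝒜 g, a ∈ J → IsNilpotent a) ∧
      (∀ (g : G), ∀ a ∈ 𝒜 g, a ∉ J →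
        ∃ b : A, b * a - 1 ∈ J ∧ a * b - 1 ∈ J) :=
  stmt_0_general 𝒜 hloc
end

section
/- Let A be a finite-dimensional G-graded algebra over a field K with G finite. If the identity component A_e is a local ring, then every homogeneous element of A is either invertible or nilpotent (i.e., A is gr-local). -/
/-!
For homogeneous `a` of degree `g`, the power `a ^ |G|` lies in the local ring `A_0`, which is
Artinian since it is finite-dimensional. In a local Artinian ring `R` every element is a unit or
nilpotent: the chain of left ideals `R x ^ n` stabilizes, giving `y x ^ (n + 1) = x ^ n`, and then
either `y x` is a unit, or `1 - y x` is one and kills `x ^ n`. Finally `a` is a unit or nilpotent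
exactly when `a ^ |G|` is.
-/

theorem IsArtinianRing.exists_mul_pow_succ_eq_pow {R : Type*} [Ring R] [IsArtinianRing R]
    (x : R) : ∃ n : ℕ, ∃ y : R, y * x ^ (n + 1) = x ^ n := by
  let chain : ℕ →o (Submodule R R)ᵒᵈ :=
    ⟨fun n ↦ OrderDual.toDual (Submodule.span R {x ^ n}), fun m n hmn ↦ by
      rw [OrderDual.toDual_le_toDual, Submodule.span_singleton_le_iff_mem,
        ← Nat.sub_add_cancel hmn, pow_add]
      exact Submodule.smul_mem _ _ (Submodule.mem_span_singleton_self _)⟩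
  obtain ⟨n, hn⟩ := IsArtinian.monotone_stabilizes chain
  have hspan : Submodule.span R {x ^ n} = Submodule.span R {x ^ (n + 1)} := hn (n + 1) n.le_succ
  have hmem : x ^ n ∈ Submodule.span R {x ^ (n + 1)} :=
    hspan ▸ Submodule.mem_span_singleton_self _
  obtain ⟨y, hy⟩ := Submodule.mem_span_singleton.mp hmem
  exact ⟨n, y, hy⟩

theorem IsLocalRing.isUnit_or_isNilpotent {R : Type*} [Ring R] [IsLocalRing R]
    [IsArtinianRing R] (x : R) : IsUnit x ∨ IsNilpotent x := by
  obtain ⟨n, y, hy⟩ := IsArtinianRing.exists_mul_pow_succ_eq_pow x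
  rcases IsLocalRing.isUnit_or_isUnit_of_add_one (add_sub_cancel (y * x) 1) with h | h
  · -- Artinian rings are Dedekind-finite, so a left inverse of `x` is a two-sided one.
    exact .inl (isUnit_of_mul_isUnit_right h)
  · refine .inr ⟨n, h.mul_left_cancel ?_⟩
    rw [mul_zero, sub_mul, one_mul, mul_assoc, ← pow_succ', hy, sub_self]

theorem SetLike.pow_card_mem_graded_zero {G A S : Type*} [AddGroup G] [Fintype G] [Monoid A]
    [SetLike S A] (𝒜 : G → S) [SetLike.GradedMonoid 𝒜] {g : G} {a : A} (ha : a ∈ 𝒜 g) :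
    a ^ Fintype.card G ∈ 𝒜 0 :=
  card_nsmul_eq_zero (x := g) ▸ SetLike.pow_mem_graded _ ha

/-- If the identity component `𝒜 0` of a finite-dimensional `G`-graded
algebra `A` (with `G` a finite group) is a local ring, then `A` is gr-local:
every homogeneous element of `A` is either invertible or nilpotent. -/
theorem stmt_1 {K G A : Type} [Field K] [AddGroup G] [DecidableEq G] [Fintype G]
    [Ring A] [Algebra K A] (𝒜 : G → Submodule K A) [GradedAlgebra 𝒜]
    [FiniteDimensional K A]
    (hlocal : IsLocalRing ↥(𝒜 (0 : G))) :
    ∀ (g : G), ∀ a ∈ 𝒜 g, IsUnit a ∨ IsNilpotent a := by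
  intro g a ha
  have : IsArtinianRing (𝒜 0) := .of_finite K (𝒜 0)
  let x : 𝒜 0 := ⟨a ^ Fintype.card G, SetLike.pow_card_mem_graded_zero 𝒜 ha⟩
  let ι : 𝒜 0 →+* A := (SetLike.GradeZero.subring 𝒜).subtype
  rcases IsLocalRing.isUnit_or_isNilpotent x with hx | hx
  · exact .inl ((isUnit_pow_iff Fintype.card_ne_zero).mp (hx.map ι))
  · exact .inr (hx.map ι).of_pow
end

section
/- Let A be a finite-dimensional G-graded algebra and M, N two finitely generated gr-indecomposable graded A-modules such that M is not graded-isomorphic to any shift S_g(N), g ∈ G. Then for any A-linear maps φ: M → N and ψ: N → M that are sums of homogeneous-degree graded morphisms, the composite φψ lies in the graded Jacobson radical J_G(End_A(M)). -/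
/-!
Write `φ = ∑ φ_k` and `ψ = ∑ ψ_k` by degree; the degree-`g` component of `ψ ∘ φ` is
`c_g = ∑_k ψ_{-k+g} ∘ φ_k`. If `c_g` were invertible, its inverse would be homogeneous of
degree `-g`, so `1 = ∑_k c_g⁻¹ ψ_{-k+g} φ_k` would be a sum of degree-zero endomorphisms of `M`.
By the graded Fitting lemma a degree-zero non-unit of the gr-indecomposable finite-length
module `M` is nilpotent, so degree-zero non-units are closed under addition and some
`c_g⁻¹ ψ_{-k+g} φ_k` is a unit. Then `φ_k` has a homogeneous left inverse `v`, and `φ_k ∘ v`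
is a degree-zero idempotent of the gr-indecomposable `N`, hence `1`: `φ_k` is a graded
isomorphism `M ≅ S_k(N)`.
-/

variable (K G A : Type) [Field K] [AddGroup G] [DecidableEq G] [Fintype G]
  [Ring A] [Algebra K A] (𝒜 : G → Submodule K A)

/-- A `G`-graded module over the `G`-graded algebra `A`. -/
structure GModule where
  carrier : Type
  [acg : AddCommGroup carrier]
  [modA : Module A carrier]
  [modK : Module K carrier]
  [tower : IsScalarTower K A carrier]
  grading : G → Submodule K carrier
  internal : DirectSum.IsInternal grading
  smul_mem : ∀ ⦃g h : G⦄ ⦃a : A⦄ ⦃m : carrier⦄,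
    a ∈ 𝒜 g → m ∈ grading h → a • m ∈ grading (g + h)

attribute [instance] GModule.acg GModule.modA GModule.modK GModule.tower

variable {K G A 𝒜}

/-- A graded morphism (degree-preserving `A`-linear map) between graded modules. -/
def IsGrMap (M N : GModule K G A 𝒜) (f : M.carrier →ₗ[A] N.carrier) : Prop :=
  ∀ ⦃g : G⦄ ⦃m : M.carrier⦄, m ∈ M.grading g → f m ∈ N.grading g

/-- A submodule `N` of a graded module is homogeneous (graded) if it contains the
homogeneous components of each of its elements. -/
def IsHomogSub {M : Type} [AddCommGroup M] [Module A M] [Module K M]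
    (ℳ : G → Submodule K M) (N : Submodule A M) : Prop :=
  ∀ (c : G →₀ M), (∀ g, c g ∈ ℳ g) → (c.sum fun _ x => x) ∈ N → ∀ g, c g ∈ N

/-- A gr-maximal submodule: a proper homogeneous submodule maximal among proper
homogeneous submodules (equivalently, the quotient is gr-simple). -/
def IsGrMaximal {M : Type} [AddCommGroup M] [Module A M] [Module K M]
    (ℳ : G → Submodule K M) (N : Submodule A M) : Prop :=
  IsHomogSub ℳ N ∧ N ≠ ⊤ ∧
    ∀ P : Submodule A M, IsHomogSub ℳ P → N < P → P = ⊤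

/-- The graded Jacobson radical: the intersection of all gr-maximal submodules. -/
def grRad {M : Type} [AddCommGroup M] [Module A M] [Module K M]
    (ℳ : G → Submodule K M) : Submodule A M :=
  sInf {N | IsGrMaximal ℳ N}

/-- A graded module is gr-projective if graded morphisms out of it lift along graded
epimorphisms. -/
def IsGrProjective (P : GModule K G A 𝒜) : Prop :=
  ∀ (M N : GModule K G A 𝒜) (φ : M.carrier →ₗ[A] N.carrier),
    IsGrMap M N φ → Function.Surjective φ →
    ∀ ψ : P.carrier →ₗ[A] N.carrier, IsGrMap P N ψ →
      ∃ σ : P.carrier →ₗ[A] M.carrier, IsGrMap P M σ ∧ φ ∘ₗ σ = ψ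

/-- gr-indecomposable: nonzero and not a direct sum of two nonzero graded submodules. -/
def GrIndec (M : GModule K G A 𝒜) : Prop :=
  (∃ m : M.carrier, m ≠ 0) ∧
  ∀ N₁ N₂ : Submodule A M.carrier, IsHomogSub M.grading N₁ → IsHomogSub M.grading N₂ →
    N₁ ⊓ N₂ = ⊥ → N₁ ⊔ N₂ = ⊤ → N₁ = ⊥ ∨ N₂ = ⊥

/-- gr-simple: nonzero with no proper nonzero graded submodules. -/
def GrSimple (M : GModule K G A 𝒜) : Prop :=
  (∃ m : M.carrier, m ≠ 0) ∧
  ∀ N : Submodule A M.carrier, IsHomogSub M.grading N → N = ⊥ ∨ N = ⊤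


/-- Graded morphisms of degree `g` between graded modules: `A`-linear maps sending
`M_h` into `N_{h+g}`. -/
def HomDeg (M N : GModule K G A 𝒜) (g : G) : Set (M.carrier →ₗ[A] N.carrier) :=
  {f | ∀ ⦃h : G⦄ ⦃m : M.carrier⦄, m ∈ M.grading h → f m ∈ N.grading (h + g)}

set_option linter.unusedSectionVars false

open DirectSum

namespace GModule

variable (M : GModule K G A 𝒜)

theorem eq_of_sum_eq {x y : G → M.carrier} (hx : ∀ g, x g ∈ M.grading g)
    (hy : ∀ g, y g ∈ M.grading g) (h : ∑ g, x g = ∑ g, y g) : x = y := by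
  have hD := M.internal.injective (a₁ := ∑ g, of (M.grading ·) g ⟨x g, hx g⟩)
    (a₂ := ∑ g, of (M.grading ·) g ⟨y g, hy g⟩) (by simpa using h)
  funext g
  simpa [DFinsupp.finsetSum_apply, DirectSum.of_apply] using congr($hD g)

theorem eq_zero_of_sum_eq_zero {x : G → M.carrier} (hx : ∀ g, x g ∈ M.grading g)
    (h : ∑ g, x g = 0) (g : G) : x g = 0 :=
  congr_fun (M.eq_of_sum_eq hx (fun _ => zero_mem _) (by simpa using h)) g

theorem eq_zero_of_sum_mem {x : G → M.carrier} (hx : ∀ g, x g ∈ M.grading g) {h : G}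
    (hsum : ∑ g, x g ∈ M.grading h) {g : G} (hg : g ≠ h) : x g = 0 := by
  have := M.eq_of_sum_eq hx (y := Pi.single h (∑ g, x g))
    (fun g => by rcases eq_or_ne g h with rfl | hne <;> simp [*]) (by simp)
  simpa [hg] using congr_fun this g

theorem exists_sum_eq (m : M.carrier) :
    ∃ x : G → M.carrier, (∀ g, x g ∈ M.grading g) ∧ ∑ g, x g = m := by
  obtain ⟨D, rfl⟩ := M.internal.surjective m
  refine ⟨fun g => D g, fun g => (D g).2, ?_⟩
  conv_rhs => rw [← DirectSum.sum_univ_of D]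
  simp

theorem nontrivial_of_grIndec (hM : GrIndec M) : Nontrivial M.carrier :=
  let ⟨m, hm⟩ := hM.1
  ⟨⟨m, 0, hm⟩⟩

end GModule

section HomDeg

variable {M N P : GModule K G A 𝒜}

theorem comp_mem_homDeg {f : M.carrier →ₗ[A] N.carrier} {f' : N.carrier →ₗ[A] P.carrier}
    {a b : G} (hf : f ∈ HomDeg M N a) (hf' : f' ∈ HomDeg N P b) :
    f' ∘ₗ f ∈ HomDeg M P (a + b) := fun h _ hm => by
  simpa [add_assoc] using hf' (hf hm)

theorem sum_mem_homDeg {ι : Type} (s : Finset ι) {g : G}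
    {f : ι → (M.carrier →ₗ[A] N.carrier)} (hf : ∀ i ∈ s, f i ∈ HomDeg M N g) :
    ∑ i ∈ s, f i ∈ HomDeg M N g := fun _ _ hm => by
  rw [LinearMap.sum_apply]
  exact Submodule.sum_mem _ fun i hi => hf i hi hm

theorem add_mem_homDeg {f f' : M.carrier →ₗ[A] N.carrier} {g : G} (hf : f ∈ HomDeg M N g)
    (hf' : f' ∈ HomDeg M N g) : f + f' ∈ HomDeg M N g := fun _ _ hm =>
  add_mem (hf hm) (hf' hm)

theorem one_mem_homDeg : (1 : Module.End A M.carrier) ∈ HomDeg M M 0 := fun _ _ hm => by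
  simpa using hm

theorem pow_mem_homDeg {f : Module.End A M.carrier} {g : G} (hf : f ∈ HomDeg M M g) (n : ℕ) :
    f ^ n ∈ HomDeg M M (n • g) := by
  induction n with
  | zero => simpa using one_mem_homDeg
  | succ n ih =>
    simpa [pow_succ', succ_nsmul, Module.End.mul_eq_comp] using comp_mem_homDeg ih hf

theorem mem_grading_of_injective {f : M.carrier →ₗ[A] N.carrier} {g : G}
    (hf : f ∈ HomDeg M N g) (hinj : Function.Injective f) {h : G} {m : M.carrier}
    (hm : f m ∈ N.grading (h + g)) : m ∈ M.grading h := by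
  obtain ⟨x, hx, rfl⟩ := M.exists_sum_eq m
  have hfx : ∑ k, f (x (k + -g)) = f (∑ k, x k) := by
    rw [map_sum]
    exact Fintype.sum_equiv (Equiv.addRight (-g)) _ _ (fun _ => rfl)
  have hzero : ∀ k ≠ h, x k = 0 := fun k hk => hinj <| by
    simpa using N.eq_zero_of_sum_mem (x := fun k => f (x (k + -g)))
      (fun k => by simpa using hf (hx (k + -g))) (hfx ▸ hm)
      (g := k + g) (by simpa using hk)
  rw [Finset.sum_eq_single h (fun k _ hk => hzero k hk) (by simp)]
  exact hx h

theorem mem_homDeg_neg_of_comp_eq_id {u : M.carrier →ₗ[A] N.carrier}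
    {v : N.carrier →ₗ[A] M.carrier} {g : G} (hu : u ∈ HomDeg M N g)
    (hinj : Function.Injective u) (huv : u ∘ₗ v = LinearMap.id) : v ∈ HomDeg N M (-g) :=
  fun h n hn => mem_grading_of_injective hu hinj <| by
    simpa [← LinearMap.comp_apply, huv] using hn

theorem inverse_mem_homDeg {u : Module.End A M.carrier} {g : G} (hu : u ∈ HomDeg M M g)
    (hunit : IsUnit u) : Ring.inverse u ∈ HomDeg M M (-g) :=
  mem_homDeg_neg_of_comp_eq_id hu ((Module.End.isUnit_iff u).mp hunit).1
    (Ring.mul_inverse_cancel u hunit)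

end HomDeg

section Homogeneous

variable {M N : GModule K G A 𝒜} {f : M.carrier →ₗ[A] N.carrier}

theorem isHomogSub_ker (hf : f ∈ HomDeg M N 0) : IsHomogSub M.grading (LinearMap.ker f) := by
  intro c hc hsum g
  rw [Finsupp.sum_fintype _ _ (fun _ => rfl), LinearMap.mem_ker, map_sum] at hsum
  exact N.eq_zero_of_sum_eq_zero (x := fun g => f (c g)) (fun g => by simpa using hf (hc g))
    hsum g

theorem isHomogSub_range (hf : f ∈ HomDeg M N 0) :
    IsHomogSub N.grading (LinearMap.range f) := by
  intro c hc hsum g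
  rw [Finsupp.sum_fintype _ _ (fun _ => rfl)] at hsum
  obtain ⟨m, hm⟩ := hsum
  obtain ⟨x, hx, rfl⟩ := M.exists_sum_eq m
  have hfx := N.eq_of_sum_eq (x := fun g => f (x g)) (fun g => by simpa using hf (hx g)) hc
    (by rw [← hm, map_sum])
  exact ⟨x g, congr_fun hfx g⟩

end Homogeneous

section Indecomposable

variable {M N : GModule K G A 𝒜}

theorem eq_zero_or_eq_one_of_isIdempotentElem (hN : GrIndec N)
    {e : Module.End A N.carrier} (he : e ∈ HomDeg N N 0) (hidem : IsIdempotentElem e) :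
    e = 0 ∨ e = 1 := by
  have hc := LinearMap.IsIdempotentElem.isCompl hidem
  rcases hN.2 _ _ (isHomogSub_range he) (isHomogSub_ker he) hc.inf_eq_bot hc.sup_eq_top
    with h | h
  · exact .inl (LinearMap.range_eq_bot.mp h)
  · refine .inr (LinearMap.ext fun x => LinearMap.ker_eq_bot.mp h ?_)
    simpa using LinearMap.congr_fun hidem.eq x

theorem isNilpotent_of_not_isUnit [IsNoetherian A M.carrier] [IsArtinian A M.carrier]
    (hM : GrIndec M) {f : Module.End A M.carrier} (hf : f ∈ HomDeg M M 0) (hu : ¬ IsUnit f) :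
    IsNilpotent f := by
  obtain ⟨n, hn⟩ := Filter.eventually_atTop.mp f.eventually_isCompl_ker_pow_range_pow
  have hfn : f ^ (n + 1) ∈ HomDeg M M 0 := by simpa using pow_mem_homDeg hf (n + 1)
  have hc := hn (n + 1) n.le_succ
  rcases hM.2 _ _ (isHomogSub_ker hfn) (isHomogSub_range hfn) hc.inf_eq_bot hc.sup_eq_top
    with h | h
  · have hinj : Function.Injective (f ^ n * f) := by
      rw [← pow_succ]
      exact LinearMap.ker_eq_bot.mp h
    rw [Module.End.coe_mul] at hinj
    exact absurd ((Module.End.isUnit_iff f).mpr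
      (IsArtinian.bijective_of_injective_endomorphism f hinj.of_comp)) hu
  · exact ⟨n + 1, LinearMap.range_eq_bot.mp h⟩

theorem isUnit_of_isUnit_add [IsNoetherian A M.carrier] [IsArtinian A M.carrier]
    (hM : GrIndec M) {f f' : Module.End A M.carrier} (hf : f ∈ HomDeg M M 0)
    (hf' : f' ∈ HomDeg M M 0) (hu : IsUnit (f + f')) (hnu : ¬ IsUnit f) : IsUnit f' := by
  set w := Ring.inverse (f + f')
  have hw : w ∈ HomDeg M M 0 := by simpa using inverse_mem_homDeg (add_mem_homDeg hf hf') hu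
  have hwf : w * f ∈ HomDeg M M 0 := by
    simpa [Module.End.mul_eq_comp] using comp_mem_homDeg hf hw
  have hcancel : ∀ k, (f + f') * (w * k) = k := fun k => by
    rw [← mul_assoc, Ring.mul_inverse_cancel _ hu, one_mul]
  have hwf_nu : ¬ IsUnit (w * f) := fun h => hnu (hcancel f ▸ hu.mul h)
  have hwf' : w * f' = 1 - w * f := by
    rw [eq_sub_iff_add_eq, ← mul_add, add_comm, Ring.inverse_mul_cancel _ hu]
  have := (isNilpotent_of_not_isUnit hM hwf hwf_nu).isUnit_one_sub
  exact hcancel f' ▸ hu.mul (hwf' ▸ this)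

theorem not_isUnit_sum [IsNoetherian A M.carrier] [IsArtinian A M.carrier] (hM : GrIndec M)
    {ι : Type} (s : Finset ι) {f : ι → Module.End A M.carrier}
    (hf : ∀ i ∈ s, f i ∈ HomDeg M M 0) (hnu : ∀ i ∈ s, ¬ IsUnit (f i)) :
    ¬ IsUnit (∑ i ∈ s, f i) := by
  classical
  have := M.nontrivial_of_grIndec hM
  induction s using Finset.induction_on with
  | empty => simp
  | insert a s ha ih =>
    rw [Finset.sum_insert ha]
    intro hu
    refine ih (fun i hi => hf i (by simp [hi])) (fun i hi => hnu i (by simp [hi])) ?_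
    exact isUnit_of_isUnit_add hM (hf a (by simp))
      (sum_mem_homDeg s fun i hi => hf i (by simp [hi])) hu (hnu a (by simp))

theorem comp_eq_id_of_comp_eq_id [Nontrivial M.carrier] (hN : GrIndec N)
    {f : M.carrier →ₗ[A] N.carrier} {v : N.carrier →ₗ[A] M.carrier} {g : G}
    (hf : f ∈ HomDeg M N g) (hv : v ∈ HomDeg N M (-g)) (hvf : v ∘ₗ f = LinearMap.id) :
    f ∘ₗ v = LinearMap.id := by
  have hvf' : ∀ x, v (f x) = x := LinearMap.congr_fun hvf
  have he : f ∘ₗ v ∈ HomDeg N N 0 := by simpa using comp_mem_homDeg hv hf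
  have hidem : IsIdempotentElem (f ∘ₗ v) :=
    LinearMap.ext fun x => congrArg f (LinearMap.congr_fun hvf (v x))
  rcases eq_zero_or_eq_one_of_isIdempotentElem hN he hidem with h | h
  · obtain ⟨m, hm⟩ := exists_ne (0 : M.carrier)
    have := congrArg v (LinearMap.congr_fun h (f m))
    simp only [LinearMap.comp_apply, LinearMap.zero_apply, map_zero, hvf'] at this
    exact absurd this hm
  · exact h

theorem exists_shift_equiv_of_isUnit_sum [IsNoetherian A M.carrier] [IsArtinian A M.carrier]
    (hM : GrIndec M) (hN : GrIndec N) {ι : Type} (s : Finset ι) {a b : ι → G} {g : G}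
    (hab : ∀ i, a i + b i = g) {φ : ι → (M.carrier →ₗ[A] N.carrier)}
    {ψ : ι → (N.carrier →ₗ[A] M.carrier)}
    (hφ : ∀ i, φ i ∈ HomDeg M N (a i)) (hψ : ∀ i, ψ i ∈ HomDeg N M (b i))
    (hu : IsUnit (∑ i ∈ s, ψ i ∘ₗ φ i)) :
    ∃ (g : G) (e : M.carrier ≃ₗ[A] N.carrier),
      ∀ ⦃h : G⦄ ⦃m : M.carrier⦄, m ∈ M.grading h → e m ∈ N.grading (h + g) := by
  set u := ∑ i ∈ s, ψ i ∘ₗ φ i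
  have hcomp : ∀ i, ψ i ∘ₗ φ i ∈ HomDeg M M g := fun i =>
    hab i ▸ comp_mem_homDeg (hφ i) (hψ i)
  have hu' : Ring.inverse u ∈ HomDeg M M (-g) :=
    inverse_mem_homDeg (sum_mem_homDeg s fun i _ => hcomp i) hu
  have ht : ∀ i, Ring.inverse u * (ψ i ∘ₗ φ i) ∈ HomDeg M M 0 := fun i => by
    simpa [Module.End.mul_eq_comp] using comp_mem_homDeg (hcomp i) hu'
  obtain ⟨i, -, hti⟩ : ∃ i ∈ s, IsUnit (Ring.inverse u * (ψ i ∘ₗ φ i)) := by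
    by_contra! h
    refine not_isUnit_sum hM s (fun i _ => ht i) h ?_
    rw [← Finset.mul_sum, Ring.inverse_mul_cancel u hu]
    exact isUnit_one
  set t := Ring.inverse u * (ψ i ∘ₗ φ i)
  set v := Ring.inverse t ∘ₗ Ring.inverse u ∘ₗ ψ i
  have hv : v ∈ HomDeg N M (-a i) := by
    have := comp_mem_homDeg (comp_mem_homDeg (hψ i) hu') (inverse_mem_homDeg (ht i) hti)
    rwa [neg_zero, add_zero, ← hab i, neg_add_rev, add_neg_cancel_left] at this
  have hvφ : v ∘ₗ φ i = LinearMap.id := by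
    simpa [v, t, LinearMap.comp_assoc, Module.End.mul_eq_comp, Module.End.one_eq_id] using
      Ring.inverse_mul_cancel t hti
  have := M.nontrivial_of_grIndec hM
  exact ⟨a i, .ofLinearMap (φ i) v (comp_eq_id_of_comp_eq_id hN (hφ i) hv hvφ) hvφ, hφ i⟩

end Indecomposable

theorem LinearMap.sum_comp_sum_eq_sum_sum {R M N P : Type*} [Semiring R] [AddCommMonoid M]
    [AddCommMonoid N] [AddCommMonoid P] [Module R M] [Module R N] [Module R P]
    (φ : G → (M →ₗ[R] N)) (ψ : G → (N →ₗ[R] P)) :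
    (∑ g, ψ g) ∘ₗ (∑ g, φ g) = ∑ g, ∑ k, ψ (-k + g) ∘ₗ φ k := by
  ext m
  simp only [LinearMap.comp_apply, LinearMap.sum_apply, map_sum]
  conv_rhs => rw [Finset.sum_comm]
  exact Fintype.sum_congr _ _ fun k => (Equiv.sum_comp (Equiv.addLeft (-k)) _).symm

theorem stmt_17_general [FiniteDimensional K A]
    (M N : GModule K G A 𝒜) [Module.Finite A M.carrier]
    (hM : GrIndec M) (hN : GrIndec N)
    (hnshift : ¬ ∃ (g : G) (e : M.carrier ≃ₗ[A] N.carrier),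
      ∀ ⦃h : G⦄ ⦃m : M.carrier⦄, m ∈ M.grading h → e m ∈ N.grading (h + g))
    (φ : M.carrier →ₗ[A] N.carrier) (ψ : N.carrier →ₗ[A] M.carrier)
    (hφ : ∃ c : G → (M.carrier →ₗ[A] N.carrier),
      (∀ g, c g ∈ HomDeg M N g) ∧ φ = ∑ g, c g)
    (hψ : ∃ c : G → (N.carrier →ₗ[A] M.carrier),
      (∀ g, c g ∈ HomDeg N M g) ∧ ψ = ∑ g, c g) :
    ∃ c : G → (Module.End A M.carrier),
      (∀ g, c g ∈ HomDeg M M g ∧ ¬ IsUnit (c g)) ∧ ψ ∘ₗ φ = ∑ g, c g := by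
  have : Module.Finite K M.carrier := .trans A M.carrier
  have : IsNoetherian A M.carrier := isNoetherian_of_tower K inferInstance
  have : IsArtinian A M.carrier := isArtinian_of_tower K inferInstance
  obtain ⟨cφ, hcφ, rfl⟩ := hφ
  obtain ⟨cψ, hcψ, rfl⟩ := hψ
  refine ⟨fun g => ∑ k, cψ (-k + g) ∘ₗ cφ k, fun g => ⟨?_, fun hu => hnshift ?_⟩,
    LinearMap.sum_comp_sum_eq_sum_sum cφ cψ⟩
  · exact sum_mem_homDeg _ fun k _ => by simpa using comp_mem_homDeg (hcφ k) (hcψ (-k + g))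
  · exact exists_shift_equiv_of_isUnit_sum hM hN Finset.univ (add_neg_cancel_left · g) hcφ
      (fun k => hcψ (-k + g)) hu

/-- Let `M`, `N` be finitely generated gr-indecomposable graded modules
over a finite-dimensional `G`-graded algebra such that `M` is not graded-isomorphic to
any shift `S_g(N)`.  Then for any `φ : M → N` and `ψ : N → M` which are sums of
homogeneous graded morphisms, the composite `φψ` (first `φ`, then `ψ`) lies in the
graded Jacobson radical of `End_A(M)`, i.e. it is a sum of non-invertible homogeneous
endomorphisms. -/
theorem stmt_17 [GradedAlgebra 𝒜] [FiniteDimensional K A]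
    (M N : GModule K G A 𝒜) [Module.Finite A M.carrier] [Module.Finite A N.carrier]
    (hM : GrIndec M) (hN : GrIndec N)
    (hnshift : ¬ ∃ (g : G) (e : M.carrier ≃ₗ[A] N.carrier),
      ∀ ⦃h : G⦄ ⦃m : M.carrier⦄, m ∈ M.grading h → e m ∈ N.grading (h + g))
    (φ : M.carrier →ₗ[A] N.carrier) (ψ : N.carrier →ₗ[A] M.carrier)
    (hφ : ∃ c : G → (M.carrier →ₗ[A] N.carrier),
      (∀ g, c g ∈ HomDeg M N g) ∧ φ = ∑ g, c g)
    (hψ : ∃ c : G → (N.carrier →ₗ[A] M.carrier),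
      (∀ g, c g ∈ HomDeg N M g) ∧ ψ = ∑ g, c g) :
    ∃ c : G → (Module.End A M.carrier),
      (∀ g, c g ∈ HomDeg M M g ∧ ¬ IsUnit (c g)) ∧ ψ ∘ₗ φ = ∑ g, c g :=
  stmt_17_general M N hM hN hnshift φ ψ hφ hψ
end
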